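/- arXiv:1310.6269 — 2 statements merged into one kernel-verified Lean document; each statement's English description precedes it below -/
import Mathlib

section
/- Let P be a fine and saturated commutative monoid (finitely generated, cancellative, and saturated in its Grothendieck group). Then there exists a torsion-free submonoid P̃ of P such that P is isomorphic to the direct sum P̃ ⊕ P^tors, where P^tors is the subgroup of torsion elements of P. -/
/-- The submonoid of torsion elements of an additive commutative monoid. -/
def torsionSubmonoid (P : Type*) [AddCommMonoid P] : AddSubmonoid P where
  carrier := {x | ∃ n : ℕ, 0 < n ∧ n • x = 0}
  zero_mem' := ⟨1, one_pos, by simp⟩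
  add_mem' := by
    rintro a b ⟨n, hn, ha⟩ ⟨m, hm, hb⟩
    refine ⟨n * m, Nat.mul_pos hn hm, ?_⟩
    have h1 : (n * m) • a = m • (n • a) := by rw [mul_comm, mul_smul]
    have h2 : (n * m) • b = n • (m • b) := by rw [mul_smul]
    rw [smul_add, h1, h2, ha, hb, smul_zero, smul_zero, add_zero]

/-- Natural torsion characterization of membership in the ℤ-torsion submodule. -/
lemma mem_int_torsion_iff {G : Type*} [AddCommGroup G] (g : G) :
    g ∈ Submodule.torsion ℤ G ↔ ∃ n : ℕ, 0 < n ∧ n • g = 0 := by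
  constructor
  · rintro ⟨a, ha⟩
    have ha' : (a : ℤ) • g = 0 := ha
    refine ⟨(a : ℤ).natAbs, Int.natAbs_pos.2 (nonZeroDivisors.coe_ne_zero a), ?_⟩
    have : ((a : ℤ).natAbs : ℤ) • g = 0 := by
      rcases Int.natAbs_eq (a : ℤ) with h | h
      · rw [← h]; exact ha'
      · have h2 : ((a : ℤ).natAbs : ℤ) = -(a : ℤ) := by omega
        rw [h2, neg_smul, ha', neg_zero]
    simpa [natCast_zsmul] using this
  · rintro ⟨n, hn, hng⟩
    refine ⟨⟨(n : ℤ), mem_nonZeroDivisors_of_ne_zero (by exact_mod_cast hn.ne')⟩, ?_⟩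
    simpa [natCast_zsmul] using hng

/-- Lemma 2.2 (i): a fine and saturated monoid `P` splits as `P̃ ⊕ P^tors` for a
torsion-free submonoid `P̃`.  Fineness is expressed by `P` being finitely generated and
cancellative, and saturation is expressed via an injective homomorphism `ι : P →+ G` onto
generators of the Grothendieck group `G`. -/
theorem fs_monoid_splits_off_torsion (P : Type*) [AddCancelCommMonoid P] [AddMonoid.FG P]
    (G : Type*) [AddCommGroup G] (ι : P →+ G) (hinj : Function.Injective ι)
    (hgen : ∀ g : G, ∃ a b : P, g = ι a - ι b)
    (hsat : ∀ g : G, (∃ n : ℕ, 0 < n ∧ n • g ∈ Set.range ι) → g ∈ Set.range ι) :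
    ∃ Pt : AddSubmonoid P, (∀ x ∈ Pt, ∀ n : ℕ, 0 < n → n • x = 0 → x = 0) ∧
      Nonempty (P ≃+ Pt × torsionSubmonoid P) := by
  classical
  -- `G` is a finitely generated abelian group.
  have hGfg : AddGroup.FG G := by
    obtain ⟨S, hSgen⟩ := (AddMonoid.fg_def.mp ‹AddMonoid.FG P›)
    refine AddGroup.fg_iff.mpr ⟨ι '' (S : Set P), ?_, (S.finite_toSet).image ι⟩
    rw [eq_top_iff]
    intro g _
    obtain ⟨a, b, rfl⟩ := hgen g
    have key : ∀ p : P, ι p ∈ AddSubgroup.closure (ι '' S) := by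
      intro p
      have hp : p ∈ AddSubmonoid.closure (S : Set P) := by rw [hSgen]; trivial
      have : ι p ∈ (AddSubmonoid.closure (S : Set P)).map ι := ⟨p, hp, rfl⟩
      rw [AddMonoidHom.map_mclosure] at this
      have hle : AddSubmonoid.closure (ι '' (S : Set P)) ≤
          (AddSubgroup.closure (ι '' (S : Set P))).toAddSubmonoid :=
        AddSubmonoid.closure_le.mpr (AddSubgroup.subset_closure)
      exact hle this
    exact sub_mem (key a) (key b)
  have : Module.Finite ℤ G := Module.Finite.iff_addGroup_fg.mpr hGfg
  -- The quotient by torsion is finite free, so the quotient map splits.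
  set T : Submodule ℤ G := Submodule.torsion ℤ G with hT
  obtain ⟨s, hs⟩ := Module.projective_lifting_property T.mkQ
    (LinearMap.id : (G ⧸ T) →ₗ[ℤ] (G ⧸ T)) (Submodule.mkQ_surjective T)
  have hs' : ∀ x : G ⧸ T, T.mkQ (s x) = x := fun x => congrArg (· x) hs
  -- the projection onto the "free part"
  set ψ : G →+ G := (s.comp T.mkQ).toAddMonoidHom with hψdef
  have hψ : ∀ g : G, ψ g = s (T.mkQ g) := fun g => rfl
  have hψψ : ∀ g : G, ψ (ψ g) = ψ g := by
    intro g; rw [hψ, hψ, hs']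
  have hψT : ∀ g ∈ T, ψ g = 0 := by
    intro g hg
    have : T.mkQ g = 0 := by
      rwa [← LinearMap.mem_ker, Submodule.ker_mkQ]
    rw [hψ, this, map_zero]
  have hdiff : ∀ g : G, g - ψ g ∈ T := by
    intro g
    rw [← Submodule.ker_mkQ (p := T), LinearMap.mem_ker, map_sub, hψ, hs', sub_self]
  -- torsion elements of `P` are exactly those with torsion image
  have hiotaT : ∀ t : P, t ∈ torsionSubmonoid P → ι t ∈ T := by
    rintro t ⟨n, hn, hnt⟩
    exact (mem_int_torsion_iff _).mpr ⟨n, hn, by rw [← map_nsmul, hnt, map_zero]⟩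
  -- the torsion-free submonoid
  refine ⟨{ carrier := {p | ψ (ι p) = ι p}
            zero_mem' := by simp
            add_mem' := by
              intro a b ha hb
              simp only [Set.mem_setOf_eq, map_add] at *
              rw [ha, hb] }, ?_, ?_⟩
  · -- torsion-freeness
    intro x hx n hn hnx
    have h1 : ι x ∈ T := (mem_int_torsion_iff _).mpr
      ⟨n, hn, by rw [← map_nsmul, hnx, map_zero]⟩
    have h2 : ψ (ι x) = ι x := hx
    have : ι x = 0 := by rw [← h2, hψT _ h1]
    exact hinj (by rw [this, map_zero])
  · -- the splitting
    set Pt : AddSubmonoid P :=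
      { carrier := {p | ψ (ι p) = ι p}
        zero_mem' := by simp
        add_mem' := by
          intro a b ha hb
          simp only [Set.mem_setOf_eq, map_add] at *
          rw [ha, hb] } with hPt
    set f : Pt × torsionSubmonoid P →+ P :=
      (Pt.subtype.comp (AddMonoidHom.fst _ _)) +
        ((torsionSubmonoid P).subtype.comp (AddMonoidHom.snd _ _)) with hf
    have hfapp : ∀ x : Pt × torsionSubmonoid P, f x = (x.1 : P) + (x.2 : P) := fun x => rfl
    have hinjf : Function.Injective f := by
      intro ⟨a, t⟩ ⟨a', t'⟩ h
      rw [hfapp, hfapp] at h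
      have hG : ι a + ι t = ι a' + ι t' := by
        rw [← map_add, ← map_add, h]
      have hψt : ψ (ι (t : P)) = 0 := hψT _ (hiotaT _ t.2)
      have hψt' : ψ (ι (t' : P)) = 0 := hψT _ (hiotaT _ t'.2)
      have ha : ι (a : P) = ι (a' : P) := by
        have := congrArg ψ hG
        rwa [map_add, map_add, hψt, hψt', add_zero, add_zero, a.2, a'.2] at this
      have haa : (a : P) = a' := hinj ha
      have htt : (t : P) = t' := by
        rw [haa] at h
        exact add_left_cancel h
      exact Prod.ext (Subtype.ext haa) (Subtype.ext htt)
    have hsurjf : Function.Surjective f := by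
      intro p
      -- the torsion part of `ι p`
      set x : G := ι p - ψ (ι p) with hxdef
      have hx : x ∈ T := hdiff (ι p)
      obtain ⟨n, hn, hnx⟩ := (mem_int_torsion_iff _).mp hx
      obtain ⟨q, hq⟩ := hsat x ⟨n, hn, by rw [hnx]; exact ⟨0, map_zero ι⟩⟩
      have hqtor : q ∈ torsionSubmonoid P := by
        refine ⟨n, hn, hinj ?_⟩
        rw [map_nsmul, hq, hnx, map_zero]
      -- the free part of `p`
      set a : P := p + (n - 1) • q with hadef
      have hpx : ψ (ι p) + x = ι p := by rw [hxdef]; abel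
      have hna : ι a = ψ (ι p) := by
        have hone : x + (n - 1) • x = n • x := by
          nth_rewrite 1 [← one_nsmul x]
          rw [← add_nsmul]
          congr 1
          omega
        have h3 : ι a = ι p + (n - 1) • x := by
          rw [hadef, map_add, map_nsmul, hq]
        rw [h3, ← hpx, add_assoc, hone, hnx, add_zero, map_add, hψψ, hψT _ hx, add_zero]
      have haPt : a ∈ Pt := by
        show ψ (ι a) = ι a
        rw [hna, hψψ]
      refine ⟨(⟨a, haPt⟩, ⟨q, hqtor⟩), ?_⟩
      rw [hfapp]
      apply hinj
      simp only [map_add, hna, hq]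
      exact hpx
    exact ⟨(AddEquiv.ofBijective f ⟨hinjf, hsurjf⟩).symm⟩
end

section
/- Let P be a fine and saturated commutative monoid. Then there exists a sharp submonoid P̄ of P (a submonoid whose only unit is 0) such that P is isomorphic to the direct sum P̄ ⊕ P*, where P* is the group of units of P. -/
/-- The submonoid of units (invertible elements) of an additive commutative monoid. -/
def unitsSubmonoid (P : Type*) [AddCommMonoid P] : AddSubmonoid P where
  carrier := {x | ∃ y : P, x + y = 0}
  zero_mem' := ⟨0, add_zero 0⟩
  add_mem' := by
    rintro a b ⟨ya, hya⟩ ⟨yb, hyb⟩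
    refine ⟨ya + yb, ?_⟩
    calc (a + b) + (ya + yb) = (a + ya) + (b + yb) := by abel
      _ = 0 := by rw [hya, hyb, add_zero]

/-- Lemma 2.2 (ii): a fine and saturated monoid `P` splits as `P̄ ⊕ P*` for a sharp
submonoid `P̄` (a submonoid whose only unit is `0`).  Fineness is expressed by `P` being
finitely generated and cancellative, and saturation via an injective homomorphism
`ι : P →+ G` onto generators of the Grothendieck group `G`. -/
theorem fs_monoid_splits_off_units (P : Type*) [AddCancelCommMonoid P] [AddMonoid.FG P]
    (G : Type*) [AddCommGroup G] (ι : P →+ G) (hinj : Function.Injective ι)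
    (hgen : ∀ g : G, ∃ a b : P, g = ι a - ι b)
    (hsat : ∀ g : G, (∃ n : ℕ, 0 < n ∧ n • g ∈ Set.range ι) → g ∈ Set.range ι) :
    ∃ Pb : AddSubmonoid P, (∀ x ∈ Pb, ∀ y ∈ Pb, x + y = 0 → x = 0) ∧
      Nonempty (P ≃+ Pb × unitsSubmonoid P) := by
  classical
  set U := unitsSubmonoid P with hU
  -- the image of the units in G, as a subgroup
  have hUneg : ∀ p q : P, p + q = 0 → p ∈ U := fun p q h => ⟨q, h⟩
  let H : AddSubgroup G :=
    { carrier := ι '' U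
      zero_mem' := ⟨0, U.zero_mem, map_zero ι⟩
      add_mem' := by
        rintro a b ⟨p, hp, rfl⟩ ⟨q, hq, rfl⟩
        exact ⟨p + q, U.add_mem hp hq, map_add ι p q⟩
      neg_mem' := by
        rintro a ⟨p, ⟨q, hpq⟩, rfl⟩
        refine ⟨q, ⟨p, by rwa [add_comm]⟩, ?_⟩
        have : ι p + ι q = 0 := by rw [← map_add, hpq, map_zero]
        exact (neg_eq_of_add_eq_zero_right this).symm }
  have hHmem : ∀ g : G, g ∈ H ↔ ∃ p : P, p ∈ U ∧ ι p = g := fun g => Iff.rfl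
  -- H-membership from g, -g ∈ range ι
  have hHof : ∀ g : G, g ∈ Set.range ι → -g ∈ Set.range ι → g ∈ H := by
    rintro g ⟨p, rfl⟩ ⟨q, hq⟩
    refine ⟨p, ⟨q, hinj ?_⟩, rfl⟩
    rw [map_add, hq, map_zero, add_neg_cancel]
  -- G is a finitely generated group
  have hGfg : AddGroup.FG G := by
    obtain ⟨S, hS, hSfin⟩ := (AddMonoid.fg_iff).mp ‹AddMonoid.FG P›
    refine AddGroup.fg_iff.mpr ⟨ι '' S, ?_, hSfin.image ι⟩
    have hrange : ∀ a : P, ι a ∈ AddSubgroup.closure (ι '' S) := by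
      intro a
      have ha : a ∈ AddSubmonoid.closure S := hS ▸ AddSubmonoid.mem_top a
      have hle : AddSubmonoid.closure S ≤
          (AddSubgroup.closure (ι '' S)).toAddSubmonoid.comap ι :=
        AddSubmonoid.closure_le.mpr fun x hx =>
          AddSubgroup.subset_closure ⟨x, hx, rfl⟩
      exact hle ha
    refine top_unique fun g _ => ?_
    obtain ⟨a, b, rfl⟩ := hgen g
    exact AddSubgroup.sub_mem _ (hrange a) (hrange b)
  -- the quotient G/H
  let Q := G ⧸ H
  let π : G →+ Q := QuotientAddGroup.mk' H
  have hπ : ∀ g : G, π g = 0 ↔ g ∈ H := fun g => QuotientAddGroup.eq_zero_iff g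
  haveI : AddGroup.FG Q := AddGroup.fg_of_surjective (QuotientAddGroup.mk'_surjective H)
  haveI : Module.Finite ℤ Q := Module.Finite.iff_addGroup_fg.mpr ‹_›
  -- Q is torsion-free
  haveI : NoZeroSMulDivisors ℤ Q := by
    refine ⟨fun {c} {q} hcq => ?_⟩
    by_cases hc : c = 0
    · exact Or.inl hc
    obtain ⟨g, rfl⟩ := QuotientAddGroup.mk'_surjective H q
    right
    have hmem : c • g ∈ H := by
      have : π (c • g) = 0 := by
        rw [map_zsmul]; exact hcq
      exact (hπ _).mp this
    set n : ℕ := c.natAbs with hn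
    have hnpos : 0 < n := Int.natAbs_pos.mpr hc
    have hng : (n : ℤ) • g = c • g ∨ (n : ℤ) • g = -(c • g) := by
      rcases Int.natAbs_eq c with h | h
      · left; rw [← h]
      · right; rw [← neg_smul]; congr 1; omega
    have hngH : (n : ℤ) • g ∈ H := by
      rcases hng with h | h
      · rw [h]; exact hmem
      · rw [h]; exact H.neg_mem hmem
    have hrg : g ∈ Set.range ι := by
      refine hsat g ⟨n, hnpos, ?_⟩
      obtain ⟨p, _, hp⟩ := hngH
      exact ⟨p, by rw [hp, natCast_zsmul]⟩
    have hrng : -g ∈ Set.range ι := by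
      refine hsat (-g) ⟨n, hnpos, ?_⟩
      have : (n : ℤ) • (-g) ∈ H := by
        rw [smul_neg]; exact H.neg_mem hngH
      obtain ⟨p, _, hp⟩ := this
      exact ⟨p, by rw [hp, natCast_zsmul]⟩
    exact (hπ g).mpr (hHof g hrg hrng)
  -- Q is free, hence projective; split the quotient map
  haveI : Module.Free ℤ Q := Module.free_of_finite_type_torsion_free'
  obtain ⟨s, hs⟩ := Module.projective_lifting_property (π.toIntLinearMap)
    (LinearMap.id) (QuotientAddGroup.mk'_surjective H)
  have hs' : ∀ q : Q, π (s q) = q := fun q => congrFun (congrArg DFunLike.coe hs) q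
  -- the retraction r : G → H (as a function into G)
  let r : G → G := fun g => g - s (π g)
  have hr_add : ∀ a b : G, r (a + b) = r a + r b := by
    intro a b
    simp only [r, map_add]
    abel
  have hr_mem : ∀ g : G, r g ∈ H := by
    intro g
    refine (hπ _).mp ?_
    simp only [r, map_sub]
    rw [hs']
    exact sub_self _
  have hr_fix : ∀ g ∈ H, r g = g := by
    intro g hg
    have : π g = 0 := (hπ g).mpr hg
    simp only [r, this, map_zero, sub_zero]
  -- the sharp submonoid
  let Pb : AddSubmonoid P :=
    { carrier := {p | r (ι p) = 0}
      zero_mem' := by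
        simp only [Set.mem_setOf_eq, map_zero]
        have := hr_fix 0 H.zero_mem
        simpa using this
      add_mem' := by
        intro a b ha hb
        simp only [Set.mem_setOf_eq, map_add] at *
        rw [hr_add, ha, hb, add_zero] }
  have hPbmem : ∀ p : P, p ∈ Pb ↔ r (ι p) = 0 := fun p => Iff.rfl
  -- units are fixed by r through ι
  have hr_unit : ∀ u : P, u ∈ U → r (ι u) = ι u := fun u hu => hr_fix _ ⟨u, hu, rfl⟩
  refine ⟨Pb, ?_, ?_⟩
  · -- sharpness
    intro x hx y hy hxy
    have hxU : x ∈ U := ⟨y, hxy⟩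
    have : ι x = 0 := by rw [← hr_unit x hxU]; exact hx
    exact hinj (by rw [this, map_zero])
  · -- the isomorphism
    let ψ : Pb × U →+ P :=
      (Pb.subtype.comp (AddMonoidHom.fst _ _)) + (U.subtype.comp (AddMonoidHom.snd _ _))
    have hψ : ∀ z : Pb × U, ψ z = (z.1 : P) + (z.2 : P) := fun z => rfl
    have hinj' : Function.Injective ψ := by
      rintro ⟨x, u⟩ ⟨x', u'⟩ h
      simp only [hψ] at h
      have hG : ι (x : P) + ι (u : P) = ι (x' : P) + ι (u' : P) := by
        rw [← map_add, ← map_add, h]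
      have hru : ι (u : P) = ι (u' : P) := by
        have h1 := hr_add (ι (x : P)) (ι (u : P))
        have h2 := hr_add (ι (x' : P)) (ι (u' : P))
        rw [hG] at h1
        rw [h1, (hPbmem _).mp x.2, (hPbmem _).mp x'.2, zero_add, zero_add,
          hr_unit _ u.2, hr_unit _ u'.2] at h2
        exact h2
      have huu : (u : P) = (u' : P) := hinj hru
      have hxx : (x : P) = (x' : P) := by
        rw [huu] at h
        exact add_right_cancel h
      exact Prod.ext (Subtype.ext hxx) (Subtype.ext huu)
    have hsurj : Function.Surjective ψ := by
      intro p
      obtain ⟨u, hu, hiu⟩ := hr_mem (ι p)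
      obtain ⟨v, hv⟩ := id hu
      have hvU : v ∈ U := ⟨u, by rwa [add_comm]⟩
      have hpv : p + v ∈ Pb := by
        rw [hPbmem, map_add, hr_add, ← hiu, hr_unit v hvU, ← map_add, hv, map_zero]
      refine ⟨⟨⟨p + v, hpv⟩, ⟨u, hu⟩⟩, ?_⟩
      rw [hψ]
      show (p + v) + u = p
      rw [add_assoc, add_comm v u, hv, add_zero]
    exact ⟨(AddEquiv.ofBijective ψ ⟨hinj', hsurj⟩).symm⟩
end
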